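/- arXiv:2006.05793 — 4 statements merged into one kernel-verified Lean document; each statement's English description precedes it below -/
import Mathlib

section
/- Let (X, Y) be a correlated Brownian motion pair with dynamic correlation ρ, observed at the integer times 1, …, T. Then for each fixed integer time i ≥ 1, the variances Var(γ̂_i^{0,0}), Var((σ̂_i^{x,0,0})²) and Var((σ̂_i^{y,0,0})²) all converge to 0 as T → ∞. -/
open MeasureTheory ProbabilityTheory Filter Finset

/-- A standard Brownian motion sampled at the integer times. -/
structure IsDiscreteBM {Ω : Type*} [MeasureSpace Ω] (X : ℕ → Ω → ℝ) : Prop where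
  meas : ∀ t, Measurable (X t)
  init : ∀ᵐ ω ∂(ℙ : Measure Ω), X 0 ω = 0
  incr : ∀ s t : ℕ, s ≤ t →
    Measure.map (fun ω => X t ω - X s ω) (ℙ : Measure Ω) = gaussianReal 0 ((t - s : ℕ) : NNReal)
  indep_incr : ∀ u : ℕ → ℕ, Monotone u →
    iIndepFun
      (fun i ω => X (u (i + 1)) ω - X (u i) ω) (ℙ : Measure Ω)

/-- Independence of two processes (as functions into `ℕ → ℝ`). -/
def ProcIndep {Ω : Type*} [MeasureSpace Ω] (A B : ℕ → Ω → ℝ) : Prop :=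
  IndepFun (fun ω t => A t ω) (fun ω t => B t ω) (ℙ : Measure Ω)

/-- A correlated Brownian motion pair with dynamic correlation `ρ`. -/
structure IsCorrBMPair {Ω : Type*} [MeasureSpace Ω] (ρ : ℕ → ℝ) (X Y : ℕ → Ω → ℝ) : Prop where
  bound : ∀ t, |ρ t| ≤ 1
  bmX : IsDiscreteBM X
  bmY : IsDiscreteBM Y
  rep : ∃ X1 Y1 : ℕ → Ω → ℝ, IsDiscreteBM X1 ∧ IsDiscreteBM Y1 ∧
    ProcIndep X1 Y ∧ ProcIndep Y1 X ∧
    (∀ t, ∀ᵐ ω ∂(ℙ : Measure Ω),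
      X t ω = ρ t * Y t ω + Real.sqrt (1 - ρ t ^ 2) * X1 t ω) ∧
    (∀ t, ∀ᵐ ω ∂(ℙ : Measure Ω),
      Y t ω = ρ t * X t ω + Real.sqrt (1 - ρ t ^ 2) * Y1 t ω)

/-- The covariance estimator `γ̂_u^{q,p}`; with `Y := X` it is `(σ̂_u^{x,q,p})²`. -/
noncomputable def gammaHat {Ω : Type*} [MeasureSpace Ω] (X Y : ℕ → Ω → ℝ) (q p : ℝ)
    (T u : ℕ) (ω : Ω) : ℝ :=
  ((T : ℝ) - 1)⁻¹ * ∑ v ∈ (Finset.Icc 1 T).erase u,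
    ((v : ℝ) ^ q * X u ω - (v : ℝ) ^ (-p) * X v ω) *
      ((v : ℝ) ^ q * Y u ω - (v : ℝ) ^ (-p) * Y v ω) / ((u : ℝ) - (v : ℝ)) ^ 2

/-- The dynamic correlation estimator `ρ̂_u^{q,p}`. -/
noncomputable def rhoHat {Ω : Type*} [MeasureSpace Ω] (X Y : ℕ → Ω → ℝ) (q p : ℝ)
    (T u : ℕ) (ω : Ω) : ℝ :=
  gammaHat X Y q p T u ω /
    (Real.sqrt (gammaHat X X q p T u ω) * Real.sqrt (gammaHat Y Y q p T u ω))

/-!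
Write `γ̂_i = (T - 1)⁻¹ ∑_{v ≠ i} f_v` with `f_v = (X_i - X_v)(Y_i - Y_v)/(i - v)²`. An increment
over a gap `d` is centred Gaussian of variance `d`, so the fourth moments of `X_i - X_v` and
`Y_i - Y_v` are `m₄ (i - v)²` with `m₄` the fourth moment of a standard Gaussian; by
`(ab)² ≤ (a⁴ + b⁴)/2` this gives `Var f_v ≤ m₄/(i - v)²`. Bounding every covariance by
`2|cov(f, g)| ≤ Var f + Var g` yields `Var (∑_{v ∈ S} f_v) ≤ #S ∑_{v ∈ S} Var f_v ≤ 4 m₄ T`, since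
`∑_{v ≠ i} (i - v)⁻² ≤ 2 ζ(2) < 4`. Hence `Var γ̂_i ≤ 4 m₄ T/(T - 1)² → 0`.
-/

open scoped NNReal ENNReal

namespace ProbabilityTheory

variable {Ω : Type*} {mΩ : MeasurableSpace Ω} {μ : Measure Ω} [IsFiniteMeasure μ]

lemma abs_covariance_le_add_variance_div_two {X Y : Ω → ℝ} (hX : MemLp X 2 μ)
    (hY : MemLp Y 2 μ) : |cov[X, Y; μ]| ≤ (Var[X; μ] + Var[Y; μ]) / 2 := by
  have h_add := variance_add hX hY
  have h_sub := variance_sub hX hY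
  have h_add_nonneg := variance_nonneg (X + Y) μ
  have h_sub_nonneg := variance_nonneg (X - Y) μ
  rw [abs_le]
  constructor <;> linarith

lemma variance_fun_sum_le_card_mul_sum {ι : Type*} {s : Finset ι} {X : ι → Ω → ℝ}
    (hX : ∀ i ∈ s, MemLp (X i) 2 μ) :
    Var[fun ω ↦ ∑ i ∈ s, X i ω; μ] ≤ #s * ∑ i ∈ s, Var[X i; μ] := by
  rw [variance_fun_sum' hX]
  calc ∑ i ∈ s, ∑ j ∈ s, cov[X i, X j; μ]
      ≤ ∑ i ∈ s, ∑ j ∈ s, (Var[X i; μ] + Var[X j; μ]) / 2 :=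
        sum_le_sum fun i hi ↦ sum_le_sum fun j hj ↦ (le_abs_self _).trans
          (abs_covariance_le_add_variance_div_two (hX i hi) (hX j hj))
    _ = #s * ∑ i ∈ s, Var[X i; μ] := by
        simp only [← sum_div, sum_add_distrib, sum_const, nsmul_eq_mul, ← mul_sum]
        ring

end ProbabilityTheory

lemma integral_pow_four_gaussianReal (v : ℝ≥0) :
    ∫ x, x ^ 4 ∂gaussianReal 0 v = (v : ℝ) ^ 2 * ∫ x, x ^ 4 ∂gaussianReal 0 1 := by
  have h : gaussianReal 0 v = (gaussianReal 0 1).map (fun x ↦ √v * x) := by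
    rw [gaussianReal_map_const_mul, mul_zero, mul_one]
    congr
    ext; simp
  rw [h, integral_map (by fun_prop) (by fun_prop), ← integral_const_mul]
  congr 1 with x
  rw [mul_pow, show (4 : ℕ) = 2 * 2 from rfl, pow_mul, Real.sq_sqrt v.coe_nonneg]

instance : ENNReal.HolderTriple 4 4 2 where
  inv_add_inv_eq_inv := by
    rw [show (4 : ℝ≥0∞) = 2 * 2 by norm_num, ENNReal.mul_inv (by simp) (by simp), ← mul_add,
      ENNReal.inv_two_add_inv_two, mul_one]

namespace IsDiscreteBM

variable {Ω : Type*} [MeasureSpace Ω] {A : ℕ → Ω → ℝ}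

lemma memLp_sub (hA : IsDiscreteBM A) (s t : ℕ) {p : ℝ≥0∞} (hp : p ≠ ∞) :
    MemLp (fun ω ↦ A t ω - A s ω) p ℙ := by
  wlog hst : s ≤ t generalizing s t
  · simpa only [Pi.neg_def, neg_sub] using (this t s (le_of_not_ge hst)).neg
  refine (memLp_map_measure_iff (f := fun ω ↦ A t ω - A s ω) aestronglyMeasurable_id
    ((hA.meas t).sub (hA.meas s)).aemeasurable).mp ?_
  rw [hA.incr s t hst]
  exact memLp_id_gaussianReal' p hp

lemma integral_sub_pow_four (hA : IsDiscreteBM A) (s t : ℕ) :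
    ∫ ω, (A t ω - A s ω) ^ 4 = ((t : ℝ) - s) ^ 2 * ∫ x, x ^ 4 ∂gaussianReal 0 1 := by
  wlog hst : s ≤ t generalizing s t
  · convert this t s (le_of_not_ge hst) using 1
    · congr 1 with ω
      ring
    · ring
  rw [← integral_map (φ := fun ω ↦ A t ω - A s ω) (f := fun x ↦ x ^ 4)
    ((hA.meas t).sub (hA.meas s)).aemeasurable (by fun_prop), hA.incr s t hst,
    integral_pow_four_gaussianReal, NNReal.coe_natCast, Nat.cast_sub hst]

lemma integrable_sub_pow_four (hA : IsDiscreteBM A) (s t : ℕ) :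
    Integrable (fun ω ↦ (A t ω - A s ω) ^ 4) ℙ := by
  simpa only [Real.norm_eq_abs, Even.pow_abs (by decide : Even 4)] using
    (hA.memLp_sub s t (p := 4) (by simp)).integrable_norm_pow (by norm_num)

variable {B : ℕ → Ω → ℝ}

lemma memLp_mul_sub (hA : IsDiscreteBM A) (hB : IsDiscreteBM B) (s t : ℕ) :
    MemLp (fun ω ↦ (A t ω - A s ω) * (B t ω - B s ω)) 2 ℙ :=
  (hB.memLp_sub s t (p := 4) (by simp)).mul' (hA.memLp_sub s t (p := 4) (by simp))

lemma integral_mul_sub_sq_le (hA : IsDiscreteBM A) (hB : IsDiscreteBM B) (s t : ℕ) :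
    ∫ ω, ((A t ω - A s ω) * (B t ω - B s ω)) ^ 2
      ≤ ((t : ℝ) - s) ^ 2 * ∫ x, x ^ 4 ∂gaussianReal 0 1 :=
  calc ∫ ω, ((A t ω - A s ω) * (B t ω - B s ω)) ^ 2
      ≤ ∫ ω, ((A t ω - A s ω) ^ 4 + (B t ω - B s ω) ^ 4) / 2 :=
        integral_mono (hA.memLp_mul_sub hB s t).integrable_sq
          (((hA.integrable_sub_pow_four s t).add (hB.integrable_sub_pow_four s t)).div_const 2)
          fun ω ↦ by nlinarith [sq_nonneg ((A t ω - A s ω) ^ 2 - (B t ω - B s ω) ^ 2)]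
    _ = ((t : ℝ) - s) ^ 2 * ∫ x, x ^ 4 ∂gaussianReal 0 1 := by
        rw [integral_div, integral_add (hA.integrable_sub_pow_four s t)
          (hB.integrable_sub_pow_four s t), hA.integral_sub_pow_four, hB.integral_sub_pow_four]
        ring

lemma variance_mul_sub_div_le [IsProbabilityMeasure (ℙ : Measure Ω)] (hA : IsDiscreteBM A)
    (hB : IsDiscreteBM B) (s t : ℕ) :
    Var[fun ω ↦ (A t ω - A s ω) * (B t ω - B s ω) / ((t : ℝ) - s) ^ 2; ℙ]
      ≤ (∫ x, x ^ 4 ∂gaussianReal 0 1) / ((t : ℝ) - s) ^ 2 := by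
  set d := ((t : ℝ) - s) ^ 2
  set M := ∫ x, x ^ 4 ∂gaussianReal 0 1
  simp_rw [div_eq_mul_inv _ d, variance_mul_const]
  calc Var[fun ω ↦ (A t ω - A s ω) * (B t ω - B s ω); ℙ] * d⁻¹ ^ 2
      ≤ d * M * d⁻¹ ^ 2 := by
        gcongr
        exact (variance_le_expectation_sq (hA.memLp_mul_sub hB s t).1).trans
          (hA.integral_mul_sub_sq_le hB s t)
    _ = M / d := by
        rcases eq_or_ne d 0 with hd | hd
        · simp [hd]
        · field_simp

end IsDiscreteBM

lemma sum_inv_sq_sub_le_two_of_subset_image {s : Finset ℕ} {c n : ℕ} {g : ℕ → ℕ}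
    (hs : s ⊆ (Ioo 0 n).image g) (hg : ∀ k ∈ Ioo 0 n, ((c : ℝ) - g k) ^ 2 = k ^ 2) :
    ∑ v ∈ s, (((c : ℝ) - v) ^ 2)⁻¹ ≤ 2 :=
  calc ∑ v ∈ s, (((c : ℝ) - v) ^ 2)⁻¹
      ≤ ∑ v ∈ (Ioo 0 n).image g, (((c : ℝ) - v) ^ 2)⁻¹ :=
        sum_le_sum_of_subset_of_nonneg hs fun _ _ _ ↦ by positivity
    _ ≤ ∑ k ∈ Ioo 0 n, (((c : ℝ) - g k) ^ 2)⁻¹ := sum_image_le_of_nonneg fun _ _ ↦ by positivity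
    _ = ∑ k ∈ Ioo 0 n, ((k : ℝ) ^ 2)⁻¹ := sum_congr rfl fun k hk ↦ by rw [hg k hk]
    _ ≤ 2 / ((0 : ℕ) + 1) := sum_Ioo_inv_sq_le 0 n
    _ = 2 := by norm_num

lemma sum_inv_sq_sub_le_four (s : Finset ℕ) (c : ℕ) :
    ∑ v ∈ s.erase c, (((c : ℝ) - v) ^ 2)⁻¹ ≤ 4 := by
  rw [← sum_filter_add_sum_filter_not _ (· < c)]
  have h_below : ∑ v ∈ (s.erase c).filter (· < c), (((c : ℝ) - v) ^ 2)⁻¹ ≤ 2 := by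
    refine sum_inv_sq_sub_le_two_of_subset_image (n := c + 1) (g := (c - ·)) (fun v hv ↦ ?_)
      fun k hk ↦ ?_
    · simp only [mem_filter] at hv
      exact mem_image.mpr ⟨c - v, mem_Ioo.mpr ⟨by omega, by omega⟩, by omega⟩
    · rw [Nat.cast_sub (Nat.le_of_lt_succ (mem_Ioo.mp hk).2)]
      ring
  have h_above : ∑ v ∈ (s.erase c).filter (¬ · < c), (((c : ℝ) - v) ^ 2)⁻¹ ≤ 2 := by
    refine sum_inv_sq_sub_le_two_of_subset_image (n := s.sup id + 1) (g := (c + ·))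
      (fun v hv ↦ ?_) fun k _ ↦ ?_
    · simp only [mem_filter, mem_erase] at hv
      have := le_sup (f := id) hv.1.2
      exact mem_image.mpr ⟨v - c, mem_Ioo.mpr ⟨by omega, by simp only [id] at this; omega⟩,
        by omega⟩
    · push_cast
      ring
  linarith

lemma tendsto_natCast_div_sub_one_sq_atTop :
    Tendsto (fun T : ℕ ↦ (T : ℝ) / ((T : ℝ) - 1) ^ 2) atTop (nhds 0) := by
  have h : Tendsto (fun T : ℕ ↦ ((T : ℝ) - 1)⁻¹) atTop (nhds 0) :=
    tendsto_inv_atTop_zero.comp (tendsto_atTop_add_const_right _ (-1) tendsto_natCast_atTop_atTop)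
  convert h.add (h.pow 2) using 2 with T
  · rcases eq_or_ne ((T : ℝ) - 1) 0 with hT | hT
    · simp [sub_eq_zero.mp hT]
    · field_simp
      ring
  · simp

lemma gammaHat_zero_zero {Ω : Type*} [MeasureSpace Ω] (A B : ℕ → Ω → ℝ) (T u : ℕ) :
    gammaHat A B 0 0 T u = fun ω ↦ ((T : ℝ) - 1)⁻¹ *
      ∑ v ∈ (Icc 1 T).erase u, (A u ω - A v ω) * (B u ω - B v ω) / ((u : ℝ) - v) ^ 2 := by
  ext ω
  simp [gammaHat]

namespace IsDiscreteBM

variable {Ω : Type*} [MeasureSpace Ω] [IsProbabilityMeasure (ℙ : Measure Ω)] {A B : ℕ → Ω → ℝ}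

lemma variance_gammaHat_le (hA : IsDiscreteBM A) (hB : IsDiscreteBM B) (T u : ℕ) :
    Var[gammaHat A B 0 0 T u; ℙ]
      ≤ 4 * (∫ x, x ^ 4 ∂gaussianReal 0 1) * ((T : ℝ) / ((T : ℝ) - 1) ^ 2) := by
  set M := ∫ x, x ^ 4 ∂gaussianReal 0 1
  set S := (Icc 1 T).erase u
  have hM : 0 ≤ M := integral_nonneg fun x ↦ by positivity
  have hcard : (#S : ℝ) ≤ T := by
    have := card_erase_le (s := Icc 1 T) (a := u)
    rw [Nat.card_Icc, Nat.add_sub_cancel] at this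
    exact_mod_cast this
  have hvar : ∑ v ∈ S, Var[fun ω ↦ (A u ω - A v ω) * (B u ω - B v ω) / ((u : ℝ) - v) ^ 2; ℙ]
      ≤ 4 * M :=
    calc _ ≤ ∑ v ∈ S, M / ((u : ℝ) - v) ^ 2 :=
          sum_le_sum fun v _ ↦ hA.variance_mul_sub_div_le hB v u
      _ = M * ∑ v ∈ S, (((u : ℝ) - v) ^ 2)⁻¹ := by simp only [div_eq_mul_inv, mul_sum]
      _ ≤ M * 4 := by gcongr; exact sum_inv_sq_sub_le_four _ _
      _ = 4 * M := mul_comm _ _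
  rw [gammaHat_zero_zero, variance_const_mul]
  calc ((T : ℝ) - 1)⁻¹ ^ 2 * Var[fun ω ↦ ∑ v ∈ S, _; ℙ]
      ≤ ((T : ℝ) - 1)⁻¹ ^ 2 * (#S * ∑ v ∈ S,
          Var[fun ω ↦ (A u ω - A v ω) * (B u ω - B v ω) / ((u : ℝ) - v) ^ 2; ℙ]) := by
        gcongr
        refine variance_fun_sum_le_card_mul_sum fun v _ ↦ ?_
        simpa only [div_eq_mul_inv] using (hA.memLp_mul_sub hB v u).mul_const _
    _ ≤ ((T : ℝ) - 1)⁻¹ ^ 2 * (T * (4 * M)) := by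
        gcongr
        exact sum_nonneg fun v _ ↦ variance_nonneg _ _
    _ = 4 * M * ((T : ℝ) / ((T : ℝ) - 1) ^ 2) := by rw [inv_pow, div_eq_mul_inv]; ring

lemma tendsto_variance_gammaHat (hA : IsDiscreteBM A) (hB : IsDiscreteBM B) (u : ℕ) :
    Tendsto (fun T ↦ Var[gammaHat A B 0 0 T u; ℙ]) atTop (nhds 0) :=
  squeeze_zero (fun _ ↦ variance_nonneg _ _) (fun T ↦ hA.variance_gammaHat_le hB T u) <| by
    simpa using tendsto_natCast_div_sub_one_sq_atTop.const_mul _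

end IsDiscreteBM

theorem statement1_general {Ω : Type*} [MeasureSpace Ω] [IsProbabilityMeasure (ℙ : Measure Ω)]
    (ρ : ℕ → ℝ) (X Y : ℕ → Ω → ℝ) (h : IsCorrBMPair ρ X Y)
    (i : ℕ) :
    Tendsto (fun T => variance (gammaHat X Y 0 0 T i) (ℙ : Measure Ω)) atTop (nhds 0) ∧
    Tendsto (fun T => variance (gammaHat X X 0 0 T i) (ℙ : Measure Ω)) atTop (nhds 0) ∧
    Tendsto (fun T => variance (gammaHat Y Y 0 0 T i) (ℙ : Measure Ω)) atTop (nhds 0) :=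
  ⟨h.bmX.tendsto_variance_gammaHat h.bmY i, h.bmX.tendsto_variance_gammaHat h.bmX i,
    h.bmY.tendsto_variance_gammaHat h.bmY i⟩

theorem statement1 {Ω : Type*} [MeasureSpace Ω] [IsProbabilityMeasure (ℙ : Measure Ω)]
    (ρ : ℕ → ℝ) (X Y : ℕ → Ω → ℝ) (h : IsCorrBMPair ρ X Y)
    (i : ℕ) (hi : 1 ≤ i) :
    Tendsto (fun T => variance (gammaHat X Y 0 0 T i) (ℙ : Measure Ω)) atTop (nhds 0) ∧
    Tendsto (fun T => variance (gammaHat X X 0 0 T i) (ℙ : Measure Ω)) atTop (nhds 0) ∧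
    Tendsto (fun T => variance (gammaHat Y Y 0 0 T i) (ℙ : Measure Ω)) atTop (nhds 0) :=
  statement1_general ρ X Y h i
end

section
/- Let (X, Y) be a correlated Brownian motion pair with dynamic correlation ρ, observed at the integer times 1, …, T. Then for each fixed integer time i ≥ 1 and all reals q, p with 0 < q ≤ 1/2 and p > 1/2, the variances Var(γ̂_i^{q,p}), Var((σ̂_i^{x,q,p})²) and Var((σ̂_i^{y,q,p})²) all converge to 0 as T → ∞. -/
open MeasureTheory ProbabilityTheory Filter Finset

/-!
Each `X_t` is `N(0, t)`, so `𝔼[X_t⁴] = t² m₄` by scaling, `m₄` being the fourth moment of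
`N(0, 1)`. For `v ≥ 1`, `q ≤ 1/2` and `p ≥ 1/2` the weights give
`𝔼[(v^q X_u - v^{-p} X_v)⁴] ≤ 8 m₄ (u² v² + 1)`, and with `v ≤ (u + 1) |u - v|` the second moment
of the `v`-th summand of `γ̂_u` is `O((u - v)⁻²)`, which is summable in `v`. Bounding the variance
by the second moment, and the square of a sum of `T` terms by `T` times the sum of squares, gives
`Var γ̂_u ≤ C T / (T - 1)² → 0`.
-/
open scoped NNReal Topology

noncomputable def gaussianFourthMoment : ℝ := ∫ x, x ^ 4 ∂gaussianReal 0 1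

lemma gaussianFourthMoment_nonneg : 0 ≤ gaussianFourthMoment :=
  integral_nonneg fun x => by positivity

lemma integrable_pow_gaussianReal (μ : ℝ) (v : ℝ≥0) (n : ℕ) :
    Integrable (fun x : ℝ => x ^ n) (gaussianReal μ v) :=
  (memLp_id_gaussianReal' n (ENNReal.natCast_ne_top n)).integrable_norm_pow'.mono'
    (by fun_prop) (ae_of_all _ fun x => by simp [norm_pow])

lemma integral_pow_gaussianReal_zero (v : ℝ≥0) (n : ℕ) :
    ∫ x, x ^ n ∂gaussianReal 0 v = √(v : ℝ) ^ n * ∫ x, x ^ n ∂gaussianReal 0 1 := by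
  have hscale : (gaussianReal 0 1).map (√(v : ℝ) * ·) = gaussianReal 0 v := by
    rw [gaussianReal_map_const_mul]
    congr 1
    · ring
    · ext; simp
  rw [← hscale, integral_map (by fun_prop) (by fun_prop)]
  simp only [mul_pow, integral_const_mul]

section Moments

variable {Ω : Type*} {mΩ : MeasurableSpace Ω} {P : Measure Ω}

lemma ProbabilityTheory.HasLaw.integrable_pow_of_gaussianReal {X : Ω → ℝ} {μ : ℝ} {v : ℝ≥0}
    (hX : HasLaw X (gaussianReal μ v) P) (n : ℕ) : Integrable (fun ω => X ω ^ n) P := by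
  have h := integrable_pow_gaussianReal μ v n
  rw [← hX.map_eq] at h
  exact h.comp_aemeasurable hX.aemeasurable

lemma ProbabilityTheory.HasLaw.integral_pow_four_of_gaussianReal {X : Ω → ℝ} {v : ℝ≥0}
    (hX : HasLaw X (gaussianReal 0 v) P) :
    ∫ ω, X ω ^ 4 ∂P = (v : ℝ) ^ 2 * gaussianFourthMoment := by
  have h := hX.integral_comp (f := fun x : ℝ => x ^ 4) (by fun_prop)
  simp only [Function.comp_def] at h
  rw [h, integral_pow_gaussianReal_zero, gaussianFourthMoment,
    show (4 : ℕ) = 2 * 2 from rfl, pow_mul, Real.sq_sqrt v.coe_nonneg]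

lemma integral_sub_pow_four_le {X Y : Ω → ℝ} {a b : ℝ≥0}
    (hX : HasLaw X (gaussianReal 0 a) P) (hY : HasLaw Y (gaussianReal 0 b) P) (c d : ℝ) :
    Integrable (fun ω => (c * X ω - d * Y ω) ^ 4) P ∧
      ∫ ω, (c * X ω - d * Y ω) ^ 4 ∂P ≤
        8 * gaussianFourthMoment * (c ^ 4 * (a : ℝ) ^ 2 + d ^ 4 * (b : ℝ) ^ 2) := by
  have hdom : Integrable (fun ω => 8 * c ^ 4 * X ω ^ 4 + 8 * d ^ 4 * Y ω ^ 4) P :=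
    ((hX.integrable_pow_of_gaussianReal 4).const_mul _).add
      ((hY.integrable_pow_of_gaussianReal 4).const_mul _)
  have hle : ∀ ω, (c * X ω - d * Y ω) ^ 4 ≤ 8 * c ^ 4 * X ω ^ 4 + 8 * d ^ 4 * Y ω ^ 4 := by
    intro ω
    nlinarith [sq_nonneg (c * X ω + d * Y ω), sq_nonneg ((c * X ω) ^ 2 - (d * Y ω) ^ 2),
      sq_nonneg (c * X ω - d * Y ω)]
  have hint : Integrable (fun ω => (c * X ω - d * Y ω) ^ 4) P :=
    hdom.mono' (by have := hX.aemeasurable; have := hY.aemeasurable; fun_prop)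
      (ae_of_all _ fun ω => by
        rw [Real.norm_eq_abs, abs_of_nonneg (by positivity)]; exact hle ω)
  refine ⟨hint, (integral_mono hint hdom hle).trans_eq ?_⟩
  rw [integral_add ((hX.integrable_pow_of_gaussianReal 4).const_mul _)
      ((hY.integrable_pow_of_gaussianReal 4).const_mul _),
    integral_const_mul, integral_const_mul, hX.integral_pow_four_of_gaussianReal,
    hY.integral_pow_four_of_gaussianReal]
  ring

lemma integral_mul_sq_le {A B : Ω → ℝ} (hA : AEStronglyMeasurable A P)
    (hB : AEStronglyMeasurable B P) (hA4 : Integrable (fun ω => A ω ^ 4) P)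
    (hB4 : Integrable (fun ω => B ω ^ 4) P) :
    Integrable (fun ω => (A ω * B ω) ^ 2) P ∧
      ∫ ω, (A ω * B ω) ^ 2 ∂P ≤ ((∫ ω, A ω ^ 4 ∂P) + ∫ ω, B ω ^ 4 ∂P) / 2 := by
  have hdom : Integrable (fun ω => (A ω ^ 4 + B ω ^ 4) / 2) P := (hA4.add hB4).div_const 2
  have hle : ∀ ω, (A ω * B ω) ^ 2 ≤ (A ω ^ 4 + B ω ^ 4) / 2 := fun ω => by
    nlinarith [sq_nonneg (A ω ^ 2 - B ω ^ 2)]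
  have hint : Integrable (fun ω => (A ω * B ω) ^ 2) P :=
    hdom.mono' (by fun_prop) (ae_of_all _ fun ω => by
      rw [Real.norm_eq_abs, abs_of_nonneg (by positivity)]; exact hle ω)
  refine ⟨hint, (integral_mono hint hdom hle).trans_eq ?_⟩
  rw [integral_div, integral_add hA4 hB4]

lemma integral_sq_sum_le_card_mul {ι : Type*} (s : Finset ι) {f : ι → Ω → ℝ}
    (hf : ∀ v ∈ s, Integrable (fun ω => f v ω ^ 2) P) :
    ∫ ω, (∑ v ∈ s, f v ω) ^ 2 ∂P ≤ #s * ∑ v ∈ s, ∫ ω, f v ω ^ 2 ∂P := by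
  calc ∫ ω, (∑ v ∈ s, f v ω) ^ 2 ∂P ≤ ∫ ω, #s * ∑ v ∈ s, f v ω ^ 2 ∂P :=
        integral_mono_of_nonneg (ae_of_all _ fun _ => sq_nonneg _)
          ((integrable_finsetSum s hf).const_mul _)
          (ae_of_all _ fun _ => sq_sum_le_card_mul_sum_sq)
    _ = #s * ∑ v ∈ s, ∫ ω, f v ω ^ 2 ∂P := by
        rw [integral_const_mul, integral_finsetSum s hf]

end Moments

lemma IsDiscreteBM.hasLaw {Ω : Type*} [MeasureSpace Ω] {Z : ℕ → Ω → ℝ} (hZ : IsDiscreteBM Z)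
    (t : ℕ) : HasLaw (Z t) (gaussianReal 0 t) ℙ where
  aemeasurable := (hZ.meas t).aemeasurable
  map_eq := by
    have hZ0 : (fun ω => Z t ω - Z 0 ω) =ᵐ[ℙ] Z t := by
      filter_upwards [hZ.init] with ω h using by simp [h]
    rw [← Measure.map_congr hZ0, hZ.incr 0 t t.zero_le, Nat.sub_zero]

lemma natCast_le_succ_mul_abs_sub {u v : ℕ} (huv : v ≠ u) :
    (v : ℝ) ≤ ((u : ℝ) + 1) * |(u : ℝ) - v| := by
  rcases huv.lt_or_gt with hlt | hgt
  · have : (v : ℝ) + 1 ≤ u := by exact_mod_cast hlt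
    rw [abs_of_pos (by linarith)]
    nlinarith
  · have : (u : ℝ) + 1 ≤ v := by exact_mod_cast hgt
    rw [abs_of_neg (by linarith)]
    nlinarith [u.cast_nonneg (α := ℝ)]

lemma sq_mul_sq_add_one_le {u v : ℕ} (huv : v ≠ u) :
    (u : ℝ) ^ 2 * (v : ℝ) ^ 2 + 1 ≤ ((u : ℝ) ^ 2 * ((u : ℝ) + 1) ^ 2 + 1) * ((u : ℝ) - v) ^ 2 := by
  have hD : 1 ≤ ((u : ℝ) - v) ^ 2 := (one_le_sq_iff_one_le_abs _).mpr <| by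
    exact_mod_cast Int.one_le_abs (sub_ne_zero.mpr (by exact_mod_cast huv.symm : (u : ℤ) ≠ v))
  have hvD : (v : ℝ) ^ 2 ≤ ((u : ℝ) + 1) ^ 2 * ((u : ℝ) - v) ^ 2 := by
    rw [← sq_abs ((u : ℝ) - v), ← mul_pow]
    exact pow_le_pow_left₀ v.cast_nonneg (natCast_le_succ_mul_abs_sub huv) 2
  nlinarith [mul_le_mul_of_nonneg_left hvD (sq_nonneg (u : ℝ))]

lemma summable_inv_natCast_sub_sq (u : ℕ) : Summable fun v : ℕ => (((u : ℝ) - v) ^ 2)⁻¹ :=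
  ((Real.summable_one_div_nat_add_rpow (-u) 2).mpr one_lt_two).congr fun v => by
    rw [Real.rpow_two, sq_abs, one_div, ← neg_sub, neg_sq, sub_eq_add_neg]

lemma tendsto_natCast_div_sub_one_sq :
    Tendsto (fun T : ℕ => (T : ℝ) / ((T : ℝ) - 1) ^ 2) atTop (𝓝 0) := by
  have h : Tendsto (fun T : ℕ => ((T : ℝ) - 1)⁻¹) atTop (𝓝 0) :=
    tendsto_inv_atTop_zero.comp (tendsto_atTop_add_const_right _ (-1) tendsto_natCast_atTop_atTop)
  -- `T / (T - 1) ^ 2 = x + x ^ 2` with `x = (T - 1)⁻¹`, also at `T = 1` where both sides are `0`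
  have heq : ∀ T : ℕ, (T : ℝ) / ((T : ℝ) - 1) ^ 2 = ((T : ℝ) - 1)⁻¹ + (((T : ℝ) - 1)⁻¹) ^ 2 := by
    intro T
    rcases eq_or_ne ((T : ℝ) - 1) 0 with h0 | h0
    · simp [h0]
    · field_simp; ring
  simpa [heq] using h.add (h.pow 2)

section Estimator

variable {Ω : Type*}

noncomputable def weightedDiff (Z : ℕ → Ω → ℝ) (q p : ℝ) (u v : ℕ) (ω : Ω) : ℝ :=
  (v : ℝ) ^ q * Z u ω - (v : ℝ) ^ (-p) * Z v ω

noncomputable def gammaSummand (Z W : ℕ → Ω → ℝ) (q p : ℝ) (u v : ℕ) (ω : Ω) : ℝ :=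
  weightedDiff Z q p u v ω * weightedDiff W q p u v ω / ((u : ℝ) - v) ^ 2

lemma gammaHat_eq_sum_gammaSummand [MeasureSpace Ω] (Z W : ℕ → Ω → ℝ) (q p : ℝ) (T u : ℕ) :
    gammaHat Z W q p T u =
      fun ω => ((T : ℝ) - 1)⁻¹ * ∑ v ∈ (Icc 1 T).erase u, gammaSummand Z W q p u v ω :=
  rfl

variable {mΩ : MeasurableSpace Ω} {P : Measure Ω} {Z W : ℕ → Ω → ℝ} {q p : ℝ} {u v : ℕ}

lemma integral_weightedDiff_pow_four_le (hZ : ∀ t : ℕ, HasLaw (Z t) (gaussianReal 0 t) P)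
    (hv : 1 ≤ v) (hq : q ≤ 1 / 2) (hp : 1 / 2 ≤ p) :
    Integrable (fun ω => weightedDiff Z q p u v ω ^ 4) P ∧
      ∫ ω, weightedDiff Z q p u v ω ^ 4 ∂P ≤
        8 * gaussianFourthMoment * ((u : ℝ) ^ 2 * (v : ℝ) ^ 2 + 1) := by
  obtain ⟨hint, hle⟩ := integral_sub_pow_four_le (hZ u) (hZ v) ((v : ℝ) ^ q) ((v : ℝ) ^ (-p))
  refine ⟨hint, hle.trans ?_⟩
  have hv1 : (1 : ℝ) ≤ v := by exact_mod_cast hv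
  have hv0 : (0 : ℝ) ≤ v := by linarith
  have hc : ((v : ℝ) ^ q) ^ 4 ≤ (v : ℝ) ^ 2 := by
    rw [← Real.rpow_natCast, ← Real.rpow_mul hv0, ← Real.rpow_natCast (v : ℝ) 2]
    exact Real.rpow_le_rpow_of_exponent_le hv1 (by push_cast; linarith)
  have hd : ((v : ℝ) ^ (-p)) ^ 4 * (v : ℝ) ^ 2 ≤ 1 := by
    rw [← Real.rpow_natCast, ← Real.rpow_mul hv0, ← Real.rpow_natCast (v : ℝ) 2,
      ← Real.rpow_add (by linarith)]
    exact Real.rpow_le_one_of_one_le_of_nonpos hv1 (by push_cast; linarith)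
  have hm := gaussianFourthMoment_nonneg
  push_cast
  refine mul_le_mul_of_nonneg_left ?_ (by positivity)
  nlinarith [mul_le_mul_of_nonneg_right hc (sq_nonneg (u : ℝ))]

lemma integral_gammaSummand_sq_le (hZ : ∀ t : ℕ, HasLaw (Z t) (gaussianReal 0 t) P)
    (hW : ∀ t : ℕ, HasLaw (W t) (gaussianReal 0 t) P) (hv : 1 ≤ v) (hvu : v ≠ u)
    (hq : q ≤ 1 / 2) (hp : 1 / 2 ≤ p) :
    Integrable (fun ω => gammaSummand Z W q p u v ω ^ 2) P ∧
      ∫ ω, gammaSummand Z W q p u v ω ^ 2 ∂P ≤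
        8 * gaussianFourthMoment * ((u : ℝ) ^ 2 * ((u : ℝ) + 1) ^ 2 + 1) *
          (((u : ℝ) - v) ^ 2)⁻¹ := by
  have hmeas : ∀ {X : ℕ → Ω → ℝ}, (∀ t : ℕ, HasLaw (X t) (gaussianReal 0 t) P) →
      AEStronglyMeasurable (weightedDiff X q p u v) P := fun hX => by
    have := (hX u).aemeasurable; have := (hX v).aemeasurable
    unfold weightedDiff; fun_prop
  obtain ⟨hZ4, hZle⟩ := integral_weightedDiff_pow_four_le (u := u) hZ hv hq hp
  obtain ⟨hW4, hWle⟩ := integral_weightedDiff_pow_four_le (u := u) hW hv hq hp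
  obtain ⟨hint, hle⟩ := integral_mul_sq_le (hmeas hZ) (hmeas hW) hZ4 hW4
  have hne : (u : ℝ) - v ≠ 0 := sub_ne_zero.mpr (by exact_mod_cast hvu.symm)
  set D : ℝ := ((u : ℝ) - v) ^ 2
  have hsq : ∀ ω, gammaSummand Z W q p u v ω ^ 2 =
      (weightedDiff Z q p u v ω * weightedDiff W q p u v ω) ^ 2 / D ^ 2 := fun ω => by
    rw [gammaSummand, div_pow]
  simp only [hsq]
  refine ⟨hint.div_const _, ?_⟩
  rw [integral_div, div_le_iff₀ (by positivity)]
  have hm := gaussianFourthMoment_nonneg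
  calc ∫ ω, (weightedDiff Z q p u v ω * weightedDiff W q p u v ω) ^ 2 ∂P
      ≤ 8 * gaussianFourthMoment * ((u : ℝ) ^ 2 * (v : ℝ) ^ 2 + 1) := by linarith
    _ ≤ 8 * gaussianFourthMoment * ((u : ℝ) ^ 2 * ((u : ℝ) + 1) ^ 2 + 1) * D := by
      rw [mul_assoc _ _ D]
      gcongr
      exact sq_mul_sq_add_one_le hvu
    _ = 8 * gaussianFourthMoment * ((u : ℝ) ^ 2 * ((u : ℝ) + 1) ^ 2 + 1) * D⁻¹ * D ^ 2 := by
      field_simp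

end Estimator

section Variance

variable {Ω : Type*} [MeasureSpace Ω] {P : Measure Ω} [IsProbabilityMeasure P]
  {Z W : ℕ → Ω → ℝ} {q p : ℝ}

lemma variance_gammaHat_le (hZ : ∀ t : ℕ, HasLaw (Z t) (gaussianReal 0 t) P)
    (hW : ∀ t : ℕ, HasLaw (W t) (gaussianReal 0 t) P) (hq : q ≤ 1 / 2) (hp : 1 / 2 ≤ p)
    (T u : ℕ) :
    variance (gammaHat Z W q p T u) P ≤ (T : ℝ) / ((T : ℝ) - 1) ^ 2 *
      (8 * gaussianFourthMoment * ((u : ℝ) ^ 2 * ((u : ℝ) + 1) ^ 2 + 1) *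
        ∑' v : ℕ, (((u : ℝ) - v) ^ 2)⁻¹) := by
  set K : ℝ := 8 * gaussianFourthMoment * ((u : ℝ) ^ 2 * ((u : ℝ) + 1) ^ 2 + 1)
  set s : Finset ℕ := (Icc 1 T).erase u
  have hterm : ∀ v ∈ s, Integrable (fun ω => gammaSummand Z W q p u v ω ^ 2) P ∧
      ∫ ω, gammaSummand Z W q p u v ω ^ 2 ∂P ≤ K * (((u : ℝ) - v) ^ 2)⁻¹ := fun v hv => by
    obtain ⟨hvu, hv⟩ := mem_erase.mp hv
    exact integral_gammaSummand_sq_le hZ hW (mem_Icc.mp hv).1 hvu hq hp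
  have hmeas : AEStronglyMeasurable (gammaHat Z W q p T u) P := by
    have := fun t => (hZ t).aemeasurable
    have := fun t => (hW t).aemeasurable
    rw [gammaHat_eq_sum_gammaSummand]
    unfold gammaSummand weightedDiff
    fun_prop
  have hcard : (#s : ℝ) ≤ T := by
    exact_mod_cast (card_erase_le.trans (Nat.card_Icc 1 T).le)
  have hsum : ∑ v ∈ s, ∫ ω, gammaSummand Z W q p u v ω ^ 2 ∂P ≤
      K * ∑' v : ℕ, (((u : ℝ) - v) ^ 2)⁻¹ := by
    refine (sum_le_sum fun v hv => (hterm v hv).2).trans ?_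
    rw [← mul_sum]
    have hK : 0 ≤ K := by have := gaussianFourthMoment_nonneg; positivity
    gcongr
    exact (summable_inv_natCast_sub_sq u).sum_le_tsum _ fun _ _ => by positivity
  calc variance (gammaHat Z W q p T u) P ≤ ∫ ω, gammaHat Z W q p T u ω ^ 2 ∂P :=
        variance_le_expectation_sq hmeas
    _ = ((T : ℝ) - 1)⁻¹ ^ 2 * ∫ ω, (∑ v ∈ s, gammaSummand Z W q p u v ω) ^ 2 ∂P := by
        simp only [gammaHat_eq_sum_gammaSummand, mul_pow, integral_const_mul]
        rfl
    _ ≤ ((T : ℝ) - 1)⁻¹ ^ 2 * (#s * ∑ v ∈ s, ∫ ω, gammaSummand Z W q p u v ω ^ 2 ∂P) := by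
        gcongr
        exact integral_sq_sum_le_card_mul s fun v hv => (hterm v hv).1
    _ ≤ ((T : ℝ) - 1)⁻¹ ^ 2 * (T * (K * ∑' v : ℕ, (((u : ℝ) - v) ^ 2)⁻¹)) := by
        gcongr
    _ = _ := by rw [div_eq_mul_inv, inv_pow]; ring

lemma tendsto_variance_gammaHat (hZ : ∀ t : ℕ, HasLaw (Z t) (gaussianReal 0 t) P)
    (hW : ∀ t : ℕ, HasLaw (W t) (gaussianReal 0 t) P) (u : ℕ) (hq : q ≤ 1 / 2) (hp : 1 / 2 ≤ p) :
    Tendsto (fun T => variance (gammaHat Z W q p T u) P) atTop (𝓝 0) :=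
  squeeze_zero (fun _ => variance_nonneg _ _) (fun T => variance_gammaHat_le hZ hW hq hp T u)
    (by simpa using tendsto_natCast_div_sub_one_sq.mul_const _)

end Variance

theorem statement2_general {Ω : Type*} [MeasureSpace Ω] [IsProbabilityMeasure (ℙ : Measure Ω)]
    (ρ : ℕ → ℝ) (X Y : ℕ → Ω → ℝ) (h : IsCorrBMPair ρ X Y)
    (i : ℕ) (q p : ℝ) (hq : q ≤ 1 / 2) (hp : 1 / 2 < p) :
    Tendsto (fun T => variance (gammaHat X Y q p T i) (ℙ : Measure Ω)) atTop (nhds 0) ∧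
    Tendsto (fun T => variance (gammaHat X X q p T i) (ℙ : Measure Ω)) atTop (nhds 0) ∧
    Tendsto (fun T => variance (gammaHat Y Y q p T i) (ℙ : Measure Ω)) atTop (nhds 0) :=
  ⟨tendsto_variance_gammaHat h.bmX.hasLaw h.bmY.hasLaw i hq hp.le,
    tendsto_variance_gammaHat h.bmX.hasLaw h.bmX.hasLaw i hq hp.le,
    tendsto_variance_gammaHat h.bmY.hasLaw h.bmY.hasLaw i hq hp.le⟩

theorem statement2 {Ω : Type*} [MeasureSpace Ω] [IsProbabilityMeasure (ℙ : Measure Ω)]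
    (ρ : ℕ → ℝ) (X Y : ℕ → Ω → ℝ) (h : IsCorrBMPair ρ X Y)
    (i : ℕ) (hi : 1 ≤ i) (q p : ℝ) (hq0 : 0 < q) (hq : q ≤ 1 / 2) (hp : 1 / 2 < p) :
    Tendsto (fun T => variance (gammaHat X Y q p T i) (ℙ : Measure Ω)) atTop (nhds 0) ∧
    Tendsto (fun T => variance (gammaHat X X q p T i) (ℙ : Measure Ω)) atTop (nhds 0) ∧
    Tendsto (fun T => variance (gammaHat Y Y q p T i) (ℙ : Measure Ω)) atTop (nhds 0) :=
  statement2_general ρ X Y h i q p hq hp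
end

section
/- Fix an integer t ≥ 1, reals p > q ≥ 1/2, and a sequence ρ : ℕ → ℝ with |ρ_s| ≤ 1 for all s. For integers T > t define N_T = t·ρ_t·Σ_{s=1, s≠t}^{T} s^{2q}/(s−t)² + Σ_{s=1, s≠t}^{T} ρ_s·s^{1−2p}/(s−t)² − 2·Σ_{s=1, s≠t}^{T} ρ_s·s^{q−p+1}/(s−t)² + 2·Σ_{s=t+1}^{T} s^{q−p}·(s·ρ_s − t·ρ_t)/(s−t)² and M_T = t·Σ_{s=1, s≠t}^{T} s^{2q}/(s−t)² + Σ_{s=1, s≠t}^{T} s^{1−2p}/(s−t)² − 2·Σ_{s=1, s≠t}^{T} s^{q−p+1}/(s−t)² + 2·Σ_{s=t+1}^{T} s^{q−p}/(s−t). Then N_T / M_T converges to ρ_t as T → ∞. -/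
/-!
Write `A_T = Σ_{s ≠ t} s^{2q}/(s-t)²`. Then `N_T = t ρ_t A_T + O(1)` and `M_T = t A_T + O(1)`:
since `|s - t| ≥ s/(t+1)`, every remaining summand is `O(s^{q-p-1})` with `q - p - 1 < -1`,
so those sums stay bounded. On the other hand `2q ≥ 1` makes the summands of `A_T` at least
`1/(s-t)` for `s > t`, so `A_T` dominates a harmonic sum and tends to infinity.
-/

open Filter Finset Asymptotics

theorem tendsto_div_of_sub_mul_isBigO_one {α : Type*} {l : Filter α} {A N : α → ℝ} {k : ℝ}
    (hA : Tendsto A l atTop) (h : (fun x => N x - k * A x) =O[l] (fun _ => (1 : ℝ))) :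
    Tendsto (fun x => N x / A x) l (nhds k) := by
  have hone : (fun _ => (1 : ℝ)) =o[l] A :=
    (isLittleO_one_left_iff ℝ).2 (tendsto_norm_atTop_atTop.comp hA)
  have hsmall := (h.trans_isLittleO hone).tendsto_div_nhds_zero.const_add k
  rw [add_zero] at hsmall
  refine hsmall.congr' ?_
  filter_upwards [hA.eventually_ne_atTop 0] with x hx
  field_simp
  ring

theorem tendsto_div_of_sub_isBigO_one {α : Type*} {l : Filter α} {A N M : α → ℝ} {c r : ℝ}
    (hc : c ≠ 0) (hA : Tendsto A l atTop)
    (hN : (fun x => N x - c * r * A x) =O[l] (fun _ => (1 : ℝ)))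
    (hM : (fun x => M x - c * A x) =O[l] (fun _ => (1 : ℝ))) :
    Tendsto (fun x => N x / M x) l (nhds r) := by
  have hlim := (tendsto_div_of_sub_mul_isBigO_one hA hN).div
    (tendsto_div_of_sub_mul_isBigO_one hA hM) hc
  rw [mul_div_cancel_left₀ r hc] at hlim
  refine hlim.congr' ?_
  filter_upwards [hA.eventually_ne_atTop 0] with x hx
  exact div_div_div_cancel_right₀ hx _ _

theorem isBigO_one_sum_of_abs_le {ι α : Type*} {l : Filter α} {S : α → Finset ι} {f g : ι → ℝ}
    (hg : Summable g) (hfg : ∀ x, ∀ i ∈ S x, |f i| ≤ g i) :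
    (fun x => ∑ i ∈ S x, f i) =O[l] (fun _ => (1 : ℝ)) := by
  refine IsBigO.of_bound (∑' i, |g i|) (Eventually.of_forall fun x => ?_)
  rw [norm_one, mul_one, Real.norm_eq_abs]
  calc |∑ i ∈ S x, f i| ≤ ∑ i ∈ S x, |f i| := abs_sum_le_sum_abs _ _
    _ ≤ ∑ i ∈ S x, |g i| := sum_le_sum fun i hi => (hfg x i hi).trans (le_abs_self _)
    _ ≤ ∑' i, |g i| := hg.abs.sum_le_tsum _ fun i _ => abs_nonneg _

theorem natCast_le_succ_mul_abs_sub_s4 {s t : ℕ} (hst : s ≠ t) :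
    (s : ℝ) ≤ (t + 1) * |(s : ℝ) - t| := by
  rcases hst.lt_or_gt with h | h
  · have h' : (s : ℝ) + 1 ≤ t := by exact_mod_cast h
    rw [abs_of_neg (by linarith)]
    nlinarith
  · have h' : (t : ℝ) + 1 ≤ s := by exact_mod_cast h
    rw [abs_of_pos (by linarith)]
    nlinarith [(t.cast_nonneg : (0 : ℝ) ≤ t)]

theorem rpow_div_sub_sq_le {s t : ℕ} (hs : 0 < s) (hst : s ≠ t) (e : ℝ) :
    (s : ℝ) ^ e / ((s : ℝ) - t) ^ 2 ≤ (t + 1) ^ 2 * (s : ℝ) ^ (e - 2) := by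
  have hs' : (0 : ℝ) < s := by exact_mod_cast hs
  have hsq : (s : ℝ) ^ 2 ≤ (t + 1) ^ 2 * ((s : ℝ) - t) ^ 2 := by
    rw [← sq_abs ((s : ℝ) - t), ← mul_pow]
    exact pow_le_pow_left₀ hs'.le (natCast_le_succ_mul_abs_sub_s4 hst) 2
  have hsplit : (s : ℝ) ^ e = (s : ℝ) ^ (e - 2) * (s : ℝ) ^ 2 := by
    rw [← Real.rpow_natCast, ← Real.rpow_add hs']
    norm_num
  have hne : (s : ℝ) - t ≠ 0 := sub_ne_zero.2 (by exact_mod_cast hst)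
  rw [div_le_iff₀ (by positivity), hsplit]
  calc (s : ℝ) ^ (e - 2) * (s : ℝ) ^ 2
      ≤ (s : ℝ) ^ (e - 2) * ((t + 1) ^ 2 * ((s : ℝ) - t) ^ 2) := by gcongr
    _ = (t + 1) ^ 2 * (s : ℝ) ^ (e - 2) * ((s : ℝ) - t) ^ 2 := by ring

theorem rpow_div_sub_le {s t : ℕ} (hst : t < s) (e : ℝ) :
    (s : ℝ) ^ e / ((s : ℝ) - t) ≤ (t + 1) * (s : ℝ) ^ (e - 1) := by
  have hts : (t : ℝ) < s := by exact_mod_cast hst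
  have hs' : (0 : ℝ) < s := lt_of_le_of_lt t.cast_nonneg hts
  have hlin := natCast_le_succ_mul_abs_sub_s4 hst.ne'
  rw [abs_of_pos (sub_pos.2 hts)] at hlin
  have hsplit : (s : ℝ) ^ e = (s : ℝ) ^ (e - 1) * s := by
    rw [Real.rpow_sub_one hs'.ne', div_mul_cancel₀ _ hs'.ne']
  rw [div_le_iff₀ (sub_pos.2 hts), hsplit]
  calc (s : ℝ) ^ (e - 1) * s ≤ (s : ℝ) ^ (e - 1) * ((t + 1) * ((s : ℝ) - t)) := by gcongr
    _ = (t + 1) * (s : ℝ) ^ (e - 1) * ((s : ℝ) - t) := by ring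

theorem isBigO_one_sum_mul_rpow_div_sub_sq (t : ℕ) {w : ℕ → ℝ} (hw : ∀ s, |w s| ≤ 1) {e : ℝ}
    (he : e < 1) :
    (fun T : ℕ => ∑ s ∈ (Icc 1 T).erase t, w s * (s : ℝ) ^ e / ((s : ℝ) - t) ^ 2)
      =O[atTop] (fun _ => (1 : ℝ)) := by
  have hg := (Real.summable_nat_rpow.2 (by linarith : e - 2 < -1)).mul_left (((t : ℝ) + 1) ^ 2)
  refine isBigO_one_sum_of_abs_le hg fun T s hs => ?_
  obtain ⟨hst, hs⟩ := mem_erase.1 hs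
  calc |w s * (s : ℝ) ^ e / ((s : ℝ) - t) ^ 2|
      = |w s| * ((s : ℝ) ^ e / ((s : ℝ) - t) ^ 2) := by
        rw [mul_div_assoc, abs_mul, abs_of_nonneg (a := (s : ℝ) ^ e / _) (by positivity)]
    _ ≤ 1 * ((s : ℝ) ^ e / ((s : ℝ) - t) ^ 2) := by gcongr; exact hw s
    _ ≤ _ := (one_mul _).trans_le (rpow_div_sub_sq_le (mem_Icc.1 hs).1 hst e)

theorem isBigO_one_sum_rpow_mul_sub_div_sub_sq (t : ℕ) {w : ℕ → ℝ} (hw : ∀ s, |w s| ≤ 1)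
    {e : ℝ} (he : e < 0) :
    (fun T : ℕ => ∑ s ∈ Icc (t + 1) T, (s : ℝ) ^ e * ((s : ℝ) * w s - t * w t) / ((s : ℝ) - t) ^ 2)
      =O[atTop] (fun _ => (1 : ℝ)) := by
  have hg := (Real.summable_nat_rpow.2 (by linarith : e + 1 - 2 < -1)).mul_left
    (2 * ((t : ℝ) + 1) ^ 2)
  refine isBigO_one_sum_of_abs_le hg fun T s hs => ?_
  have hts : t < s := (mem_Icc.1 hs).1
  have hts' : (t : ℝ) < s := by exact_mod_cast hts
  have hs' : (0 : ℝ) < s := lt_of_le_of_lt t.cast_nonneg hts'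
  have hw' : |(s : ℝ) * w s - t * w t| ≤ 2 * s := by
    have hws := abs_le.1 (hw s)
    have hwt := abs_le.1 (hw t)
    rw [abs_le]
    constructor <;> nlinarith [(t.cast_nonneg : (0 : ℝ) ≤ t)]
  calc |(s : ℝ) ^ e * ((s : ℝ) * w s - t * w t) / ((s : ℝ) - t) ^ 2|
      = (s : ℝ) ^ e * |(s : ℝ) * w s - t * w t| / ((s : ℝ) - t) ^ 2 := by
        rw [abs_div, abs_mul, abs_of_pos (by positivity), abs_of_nonneg (sq_nonneg ((s : ℝ) - t))]
    _ ≤ (s : ℝ) ^ e * (2 * s) / ((s : ℝ) - t) ^ 2 := by gcongr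
    _ = 2 * ((s : ℝ) ^ (e + 1) / ((s : ℝ) - t) ^ 2) := by
        rw [Real.rpow_add_one hs'.ne']
        ring
    _ ≤ 2 * ((t + 1) ^ 2 * (s : ℝ) ^ (e + 1 - 2)) := by
        gcongr
        exact rpow_div_sub_sq_le (by omega) hts.ne' _
    _ = _ := by ring

theorem isBigO_one_sum_rpow_div_sub (t : ℕ) {e : ℝ} (he : e < 0) :
    (fun T : ℕ => ∑ s ∈ Icc (t + 1) T, (s : ℝ) ^ e / ((s : ℝ) - t))
      =O[atTop] (fun _ => (1 : ℝ)) := by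
  have hg := (Real.summable_nat_rpow.2 (by linarith : e - 1 < -1)).mul_left ((t : ℝ) + 1)
  refine isBigO_one_sum_of_abs_le hg fun T s hs => ?_
  have hts : t < s := (mem_Icc.1 hs).1
  have hts' : (t : ℝ) < s := by exact_mod_cast hts
  rw [abs_of_nonneg (div_nonneg (by positivity) (sub_pos.2 hts').le)]
  exact rpow_div_sub_le hts e

theorem tendsto_sum_rpow_div_sub_sq_atTop (t : ℕ) {r : ℝ} (hr : 1 ≤ r) :
    Tendsto (fun T : ℕ => ∑ s ∈ (Icc 1 T).erase t, (s : ℝ) ^ r / ((s : ℝ) - t) ^ 2)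
      atTop atTop := by
  refine tendsto_atTop_mono (fun T => ?_)
    (Real.tendsto_sum_range_one_div_nat_succ_atTop.comp (tendsto_sub_atTop_nat t))
  have hsub : Ico (t + 1) (T + 1) ⊆ (Icc 1 T).erase t := by
    intro s
    simp only [mem_Ico, mem_erase, mem_Icc]
    omega
  have hterm : ∀ k : ℕ,
      1 / ((k : ℝ) + 1) ≤ (((t + 1 + k : ℕ) : ℝ)) ^ r / (((t + 1 + k : ℕ) : ℝ) - t) ^ 2 := by
    intro k
    have hk : ((t + 1 + k : ℕ) : ℝ) - t = k + 1 := by push_cast; ring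
    have hpow : (k : ℝ) + 1 ≤ ((t + 1 + k : ℕ) : ℝ) ^ r := by
      have hle : (k : ℝ) + 1 ≤ ((t + 1 + k : ℕ) : ℝ) := by
        push_cast
        linarith [(t.cast_nonneg : (0 : ℝ) ≤ t)]
      calc (k : ℝ) + 1 ≤ ((t + 1 + k : ℕ) : ℝ) ^ (1 : ℝ) := by rwa [Real.rpow_one]
        _ ≤ _ := Real.rpow_le_rpow_of_exponent_le (by linarith [k.cast_nonneg (α := ℝ)]) hr
    rw [hk]
    calc 1 / ((k : ℝ) + 1) = ((k : ℝ) + 1) / ((k : ℝ) + 1) ^ 2 := by field_simp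
      _ ≤ _ := by gcongr
  calc ∑ k ∈ range (T - t), 1 / ((k : ℝ) + 1)
      ≤ ∑ k ∈ range (T + 1 - (t + 1)),
          ((t + 1 + k : ℕ) : ℝ) ^ r / (((t + 1 + k : ℕ) : ℝ) - t) ^ 2 := by
        rw [Nat.add_sub_add_right]
        exact sum_le_sum fun k _ => hterm k
    _ = ∑ s ∈ Ico (t + 1) (T + 1), (s : ℝ) ^ r / ((s : ℝ) - t) ^ 2 :=
        (sum_Ico_eq_sum_range (fun s : ℕ => (s : ℝ) ^ r / ((s : ℝ) - t) ^ 2) _ _).symm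
    _ ≤ _ := sum_le_sum_of_subset_of_nonneg hsub fun s _ _ => by positivity

theorem statement4 (t : ℕ) (ht : 1 ≤ t) (q p : ℝ) (hq : 1 / 2 ≤ q) (hpq : q < p)
    (ρ : ℕ → ℝ) (hρ : ∀ s, |ρ s| ≤ 1) :
    Tendsto (fun T : ℕ =>
        ((t : ℝ) * ρ t * ∑ s ∈ (Finset.Icc 1 T).erase t, (s : ℝ) ^ (2 * q) / ((s : ℝ) - t) ^ 2
            + ∑ s ∈ (Finset.Icc 1 T).erase t, ρ s * (s : ℝ) ^ (1 - 2 * p) / ((s : ℝ) - t) ^ 2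
            - 2 * ∑ s ∈ (Finset.Icc 1 T).erase t,
                ρ s * (s : ℝ) ^ (q - p + 1) / ((s : ℝ) - t) ^ 2
            + 2 * ∑ s ∈ Finset.Icc (t + 1) T,
                (s : ℝ) ^ (q - p) * ((s : ℝ) * ρ s - (t : ℝ) * ρ t) / ((s : ℝ) - t) ^ 2) /
          ((t : ℝ) * ∑ s ∈ (Finset.Icc 1 T).erase t, (s : ℝ) ^ (2 * q) / ((s : ℝ) - t) ^ 2
            + ∑ s ∈ (Finset.Icc 1 T).erase t, (s : ℝ) ^ (1 - 2 * p) / ((s : ℝ) - t) ^ 2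
            - 2 * ∑ s ∈ (Finset.Icc 1 T).erase t, (s : ℝ) ^ (q - p + 1) / ((s : ℝ) - t) ^ 2
            + 2 * ∑ s ∈ Finset.Icc (t + 1) T, (s : ℝ) ^ (q - p) / ((s : ℝ) - t)))
      atTop (nhds (ρ t)) := by
  have he₁ : 1 - 2 * p < 1 := by linarith
  have he₂ : q - p + 1 < 1 := by linarith
  have hM₁ := isBigO_one_sum_mul_rpow_div_sub_sq t (w := fun _ => 1) (fun _ => abs_one.le) he₁
  have hM₂ := isBigO_one_sum_mul_rpow_div_sub_sq t (w := fun _ => 1) (fun _ => abs_one.le) he₂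
  simp only [one_mul] at hM₁ hM₂
  refine tendsto_div_of_sub_isBigO_one (c := (t : ℝ)) (by positivity)
    (tendsto_sum_rpow_div_sub_sq_atTop t (by linarith : 1 ≤ 2 * q)) ?_ ?_
  · refine (((isBigO_one_sum_mul_rpow_div_sub_sq t hρ he₁).sub
      ((isBigO_one_sum_mul_rpow_div_sub_sq t hρ he₂).const_mul_left 2)).add
      ((isBigO_one_sum_rpow_mul_sub_div_sub_sq t hρ (sub_neg.2 hpq)).const_mul_left 2)).congr_left
      fun T => ?_
    ring
  · refine ((hM₁.sub (hM₂.const_mul_left 2)).add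
      ((isBigO_one_sum_rpow_div_sub t (sub_neg.2 hpq)).const_mul_left 2)).congr_left fun T => ?_
    ring
end

section
/- Fix σ > 0 and let (W, U) be a correlated Brownian motion pair with dynamic correlation r. For the estimator γ̂_t of Eq. (2) and the corresponding variance estimators σ̂²_{t,W} and σ̂²_{t,U}, if c > a > 0 and b > a + 10, then for each fixed integer t ≥ 1 the variances Var(γ̂_t), Var(σ̂²_{t,W}) and Var(σ̂²_{t,U}) all converge to 0 as T → ∞. -/
open MeasureTheory ProbabilityTheory Filter Finset

/-- The Eq. (2) covariance estimator `γ̂_t` for a Geometric Brownian motion pair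
`(e^{σW}, e^{σU})`; with `U := W` it is the variance estimator `σ̂²_{t,W}`. -/
noncomputable def gbmGammaEq2 {Ω : Type*} [MeasureSpace Ω] (σ a b c : ℝ) (W U : ℕ → Ω → ℝ)
    (T t : ℕ) (ω : Ω) : ℝ :=
  Real.exp (-(c * σ ^ 2 * T)) * ∑ k ∈ Finset.Icc 1 T,
    ((Real.exp (-(b * σ ^ 2 * k) / 2) * (Real.exp (σ * W k ω) - Real.exp (σ ^ 2 * k / 2))
        - Real.exp (a * σ ^ 2 * k / 2) * (Real.exp (σ * W t ω) - Real.exp (σ ^ 2 * t / 2)))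
      * (Real.exp (-(b * σ ^ 2 * k) / 2) * (Real.exp (σ * U k ω) - Real.exp (σ ^ 2 * k / 2))
        - Real.exp (a * σ ^ 2 * k / 2) * (Real.exp (σ * U t ω) - Real.exp (σ ^ 2 * t / 2))))

/-- The dynamic correlation `ρ_t` of the Geometric Brownian motion pair
`(e^{σW}, e^{σU})` when `(W,U)` has dynamic correlation `r`. -/
noncomputable def gbmCorr (σ : ℝ) (r : ℕ → ℝ) (t : ℕ) : ℝ :=
  (Real.exp (r t * σ ^ 2 * t) - 1) / (Real.exp (σ ^ 2 * t) - 1)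

/-!
Since `Var ≤ E[γ̂²]`, Cauchy–Schwarz over `k` and `(xy)² ≤ (x⁴ + y⁴)/2` reduce `Var(γ̂_T)` to
`e^{-2cσ²T} T Σ_{k ≤ T} (E A_k⁴ + E B_k⁴)/2`, where `A_k, B_k` are the factors of Eq. (2).
Expanding `A_k⁴` crudely and using the Gaussian moment generating function `E e^{sW_k} = e^{ks²/2}`
gives `E A_k⁴ ≤ 256 e^{8σ²t} e^{2aσ²k}` as soon as `a + b ≥ 4`. Hence
`Var(γ̂_T) ≤ 256 e^{8σ²t} T² e^{-2(c-a)σ²T}`, which tends to `0` because `c > a`.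
-/

open Real
open scoped NNReal

namespace IsDiscreteBM

variable {Ω : Type*} [MeasureSpace Ω] {X : ℕ → Ω → ℝ}

lemma hasLaw_s7 (hX : IsDiscreteBM X) (k : ℕ) : HasLaw (X k) (gaussianReal 0 k) := by
  refine ⟨(hX.meas k).aemeasurable, ?_⟩
  have hX0 : (fun ω => X k ω - X 0 ω) =ᵐ[ℙ] X k := hX.init.mono fun ω h => by simp [h]
  simpa using (Measure.map_congr hX0).symm.trans (hX.incr 0 k k.zero_le)

end IsDiscreteBM

section Gaussian

variable {Ω : Type*} [MeasurableSpace Ω] {P : Measure Ω} {Z : Ω → ℝ} {v : ℝ≥0}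

lemma integral_exp_mul_of_hasLaw_gaussianReal (hZ : HasLaw Z (gaussianReal 0 v) P) (s : ℝ) :
    ∫ ω, exp (s * Z ω) ∂P = exp (v * s ^ 2 / 2) := by
  simpa [mgf] using mgf_gaussianReal hZ.map_eq s

lemma integrable_exp_mul_of_hasLaw_gaussianReal [IsProbabilityMeasure P]
    (hZ : HasLaw Z (gaussianReal 0 v) P) (s : ℝ) :
    Integrable (fun ω => exp (s * Z ω)) P := by
  rw [← mgf_pos_iff, mgf_gaussianReal hZ.map_eq]
  exact exp_pos _

end Gaussian

lemma add_pow_four_le (p q : ℝ) : (p + q) ^ 4 ≤ 8 * (p ^ 4 + q ^ 4) := by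
  nlinarith [sq_nonneg (p - q), sq_nonneg (p + q), sq_nonneg (p ^ 2 - q ^ 2)]

lemma sub_pow_four_le (p q : ℝ) : (p - q) ^ 4 ≤ 8 * (p ^ 4 + q ^ 4) := by
  simpa [sub_eq_add_neg, Even.neg_pow (by decide : Even 4)] using add_pow_four_le p (-q)

lemma sub_sub_sub_pow_four_le (x y u v : ℝ) :
    (x - y - (u - v)) ^ 4 ≤ 64 * (x ^ 4 + y ^ 4 + u ^ 4 + v ^ 4) := by
  nlinarith [sub_pow_four_le (x - y) (u - v), sub_pow_four_le x y, sub_pow_four_le u v]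

lemma integral_sq_sum_mul_le {Ω ι : Type*} [MeasurableSpace Ω] {μ : Measure Ω} (s : Finset ι)
    {A B g h : ι → Ω → ℝ} (hAg : ∀ k ω, A k ω ^ 4 ≤ g k ω) (hBh : ∀ k ω, B k ω ^ 4 ≤ h k ω)
    (hg : ∀ k, Integrable (g k) μ) (hh : ∀ k, Integrable (h k) μ) :
    ∫ ω, (∑ k ∈ s, A k ω * B k ω) ^ 2 ∂μ
      ≤ #s * ∑ k ∈ s, (∫ ω, g k ω ∂μ + ∫ ω, h k ω ∂μ) / 2 := by
  have hpt : ∀ ω, (∑ k ∈ s, A k ω * B k ω) ^ 2 ≤ #s * ∑ k ∈ s, (g k ω + h k ω) / 2 := fun ω =>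
    calc (∑ k ∈ s, A k ω * B k ω) ^ 2 ≤ #s * ∑ k ∈ s, (A k ω * B k ω) ^ 2 :=
          sq_sum_le_card_mul_sum_sq
      _ ≤ #s * ∑ k ∈ s, (g k ω + h k ω) / 2 := by
          gcongr with k
          nlinarith [two_mul_le_add_sq (A k ω ^ 2) (B k ω ^ 2), hAg k ω, hBh k ω]
  have hint : ∀ k, Integrable (fun ω => (g k ω + h k ω) / 2) μ :=
    fun k => ((hg k).add (hh k)).div_const 2
  calc ∫ ω, (∑ k ∈ s, A k ω * B k ω) ^ 2 ∂μ
      ≤ ∫ ω, #s * ∑ k ∈ s, (g k ω + h k ω) / 2 ∂μ :=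
        integral_mono_of_nonneg (ae_of_all _ fun ω => sq_nonneg _)
          ((integrable_finsetSum s fun k _ => hint k).const_mul _) (ae_of_all _ hpt)
    _ = #s * ∑ k ∈ s, (∫ ω, g k ω ∂μ + ∫ ω, h k ω ∂μ) / 2 := by
        rw [integral_const_mul, integral_finsetSum s fun k _ => hint k]
        simp only [integral_div, integral_add (hg _) (hh _)]

section Estimator

variable {Ω : Type*}

noncomputable def gbmEq2Factor (σ a b : ℝ) (Z : ℕ → Ω → ℝ) (t k : ℕ) (ω : Ω) : ℝ :=
  exp (-(b * σ ^ 2 * k) / 2) * (exp (σ * Z k ω) - exp (σ ^ 2 * k / 2))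
    - exp (a * σ ^ 2 * k / 2) * (exp (σ * Z t ω) - exp (σ ^ 2 * t / 2))

lemma gbmGammaEq2_eq [MeasureSpace Ω] (σ a b c : ℝ) (X Y : ℕ → Ω → ℝ) (T t : ℕ) (ω : Ω) :
    gbmGammaEq2 σ a b c X Y T t ω
      = exp (-(c * σ ^ 2 * T)) *
        ∑ k ∈ Icc 1 T, gbmEq2Factor σ a b X t k ω * gbmEq2Factor σ a b Y t k ω :=
  rfl

/-- `64` times the sum of the fourth powers of the four exponential terms of `gbmEq2Factor`. -/
noncomputable def gbmEq2Majorant (σ a b : ℝ) (Z : ℕ → Ω → ℝ) (t k : ℕ) (ω : Ω) : ℝ :=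
  64 * (exp (-2 * b * σ ^ 2 * k) * exp (4 * σ * Z k ω) + exp ((2 - 2 * b) * σ ^ 2 * k)
    + exp (2 * a * σ ^ 2 * k) * exp (4 * σ * Z t ω) + exp (2 * a * σ ^ 2 * k + 2 * σ ^ 2 * t))

lemma gbmEq2Factor_pow_four_le (σ a b : ℝ) (Z : ℕ → Ω → ℝ) (t k : ℕ) (ω : Ω) :
    gbmEq2Factor σ a b Z t k ω ^ 4 ≤ gbmEq2Majorant σ a b Z t k ω := by
  have hexp : ∀ x y : ℝ, (exp x * exp y) ^ 4 = exp (4 * x + 4 * y) := fun x y => by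
    rw [← exp_add, ← exp_nat_mul]; push_cast; ring_nf
  convert sub_sub_sub_pow_four_le (exp (-(b * σ ^ 2 * k) / 2) * exp (σ * Z k ω))
    (exp (-(b * σ ^ 2 * k) / 2) * exp (σ ^ 2 * k / 2)) (exp (a * σ ^ 2 * k / 2) * exp (σ * Z t ω))
    (exp (a * σ ^ 2 * k / 2) * exp (σ ^ 2 * t / 2)) using 1
  · rw [gbmEq2Factor]; ring
  · rw [gbmEq2Majorant, hexp, hexp, hexp, hexp, ← exp_add, ← exp_add]
    ring_nf

end Estimator

section Moments

variable {Ω : Type*} [MeasureSpace Ω] [IsProbabilityMeasure (ℙ : Measure Ω)] {σ a b : ℝ}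
  {Z : ℕ → Ω → ℝ} {t k : ℕ}

lemma integrable_gbmEq2Majorant (hZ : ∀ k, HasLaw (Z k) (gaussianReal 0 k)) :
    Integrable (gbmEq2Majorant σ a b Z t k) := by
  have hexp : ∀ j, Integrable (fun ω => exp (4 * σ * Z j ω)) :=
    fun j => integrable_exp_mul_of_hasLaw_gaussianReal (hZ j) _
  unfold gbmEq2Majorant
  fun_prop

lemma integral_gbmEq2Majorant_le (hZ : ∀ k, HasLaw (Z k) (gaussianReal 0 k)) (hab : 4 ≤ a + b) :
    ∫ ω, gbmEq2Majorant σ a b Z t k ω ≤ 256 * exp (2 * a * σ ^ 2 * k + 8 * σ ^ 2 * t) := by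
  have hexp : ∀ j, Integrable (fun ω => exp (4 * σ * Z j ω)) :=
    fun j => integrable_exp_mul_of_hasLaw_gaussianReal (hZ j) _
  have hmgf : ∀ j : ℕ, ∫ ω, exp (4 * σ * Z j ω) = exp (8 * σ ^ 2 * j) := fun j => by
    rw [integral_exp_mul_of_hasLaw_gaussianReal (hZ j)]; push_cast; ring_nf
  have hσk : 0 ≤ σ ^ 2 * k := by positivity
  have hσt : 0 ≤ σ ^ 2 * t := by positivity
  have h1 : exp (-2 * b * σ ^ 2 * k) * exp (8 * σ ^ 2 * k)
      ≤ exp (2 * a * σ ^ 2 * k + 8 * σ ^ 2 * t) := by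
    rw [← exp_add, exp_le_exp]; nlinarith
  have h2 : exp ((2 - 2 * b) * σ ^ 2 * k) ≤ exp (2 * a * σ ^ 2 * k + 8 * σ ^ 2 * t) :=
    exp_le_exp.mpr (by nlinarith)
  have h3 : exp (2 * a * σ ^ 2 * k) * exp (8 * σ ^ 2 * t)
      = exp (2 * a * σ ^ 2 * k + 8 * σ ^ 2 * t) := (exp_add _ _).symm
  have h4 : exp (2 * a * σ ^ 2 * k + 2 * σ ^ 2 * t) ≤ exp (2 * a * σ ^ 2 * k + 8 * σ ^ 2 * t) :=
    exp_le_exp.mpr (by linarith)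
  unfold gbmEq2Majorant
  rw [integral_const_mul, integral_add, integral_add, integral_add]
  · simp only [integral_const_mul, integral_const, hmgf, probReal_univ, one_smul]
    linarith
  all_goals fun_prop

end Moments

section Variance

variable {Ω : Type*} [MeasureSpace Ω] [IsProbabilityMeasure (ℙ : Measure Ω)] {σ a b c : ℝ}
  {X Y : ℕ → Ω → ℝ} {t : ℕ}

lemma variance_gbmGammaEq2_le (hX : ∀ k, HasLaw (X k) (gaussianReal 0 k))
    (hY : ∀ k, HasLaw (Y k) (gaussianReal 0 k)) (ha : 0 ≤ a) (hab : 4 ≤ a + b) (T : ℕ) :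
    variance (gbmGammaEq2 σ a b c X Y T t) ℙ
      ≤ 256 * exp (8 * σ ^ 2 * t) * (T ^ 2 * exp (-(2 * (c - a) * σ ^ 2)) ^ T) := by
  have hmeas : AEStronglyMeasurable (gbmGammaEq2 σ a b c X Y T t) ℙ := by
    have hXm := fun k => (hX k).aemeasurable
    have hYm := fun k => (hY k).aemeasurable
    unfold gbmGammaEq2
    fun_prop
  have hmoment : ∀ k ∈ Icc 1 T, ((∫ ω, gbmEq2Majorant σ a b X t k ω)
      + ∫ ω, gbmEq2Majorant σ a b Y t k ω) / 2
        ≤ 256 * exp (2 * a * σ ^ 2 * T + 8 * σ ^ 2 * t) := by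
    intro k hk
    have hkT : 2 * a * σ ^ 2 * k ≤ 2 * a * σ ^ 2 * T := by
      gcongr; exact_mod_cast (mem_Icc.mp hk).2
    have hXk := integral_gbmEq2Majorant_le (σ := σ) (t := t) (k := k) hX hab
    have hYk := integral_gbmEq2Majorant_le (σ := σ) (t := t) (k := k) hY hab
    have hexp : exp (2 * a * σ ^ 2 * k + 8 * σ ^ 2 * t)
        ≤ exp (2 * a * σ ^ 2 * T + 8 * σ ^ 2 * t) := exp_le_exp.mpr (by linarith)
    linarith
  calc variance (gbmGammaEq2 σ a b c X Y T t) ℙ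
      ≤ ∫ ω, gbmGammaEq2 σ a b c X Y T t ω ^ 2 := variance_le_expectation_sq hmeas
    _ = exp (-(c * σ ^ 2 * T)) ^ 2 * ∫ ω, (∑ k ∈ Icc 1 T,
          gbmEq2Factor σ a b X t k ω * gbmEq2Factor σ a b Y t k ω) ^ 2 := by
        simp only [gbmGammaEq2_eq, mul_pow, integral_const_mul]
    _ ≤ exp (-(c * σ ^ 2 * T)) ^ 2 * (T * ∑ k ∈ Icc 1 T,
          ((∫ ω, gbmEq2Majorant σ a b X t k ω) + ∫ ω, gbmEq2Majorant σ a b Y t k ω) / 2) := by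
        gcongr
        simpa using integral_sq_sum_mul_le (Icc 1 T) (gbmEq2Factor_pow_four_le σ a b X t)
          (gbmEq2Factor_pow_four_le σ a b Y t) (fun k => integrable_gbmEq2Majorant hX)
          (fun k => integrable_gbmEq2Majorant hY)
    _ ≤ exp (-(c * σ ^ 2 * T)) ^ 2
          * (T * (T * (256 * exp (2 * a * σ ^ 2 * T + 8 * σ ^ 2 * t)))) := by
        gcongr
        simpa using sum_le_card_nsmul _ _ _ hmoment
    _ = 256 * exp (8 * σ ^ 2 * t) * (T ^ 2 * exp (-(2 * (c - a) * σ ^ 2)) ^ T) := by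
        have hexp : exp (-(c * σ ^ 2 * T)) ^ 2 * exp (2 * a * σ ^ 2 * T + 8 * σ ^ 2 * t)
            = exp (8 * σ ^ 2 * t) * exp (-(2 * (c - a) * σ ^ 2)) ^ T := by
          rw [← exp_nat_mul, ← exp_nat_mul, ← exp_add, ← exp_add]
          ring_nf
        linear_combination (256 * (T : ℝ) ^ 2) * hexp

lemma tendsto_variance_gbmGammaEq2 (hX : ∀ k, HasLaw (X k) (gaussianReal 0 k))
    (hY : ∀ k, HasLaw (Y k) (gaussianReal 0 k)) (hσ : σ ≠ 0) (ha : 0 ≤ a) (hab : 4 ≤ a + b)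
    (hac : a < c) :
    Tendsto (fun T => variance (gbmGammaEq2 σ a b c X Y T t) ℙ) atTop (nhds 0) := by
  have hrate : |exp (-(2 * (c - a) * σ ^ 2))| < 1 := by
    rw [abs_of_pos (exp_pos _), exp_lt_one_iff, neg_lt_zero]
    have := sub_pos.mpr hac
    positivity
  have hbound := (tendsto_pow_const_mul_const_pow_of_abs_lt_one 2 hrate).const_mul
    (256 * exp (8 * σ ^ 2 * t))
  rw [mul_zero] at hbound
  exact squeeze_zero (fun T => variance_nonneg _ _)
    (variance_gbmGammaEq2_le hX hY ha hab) hbound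

end Variance

theorem statement7_general {Ω : Type*} [MeasureSpace Ω] [IsProbabilityMeasure (ℙ : Measure Ω)]
    (σ : ℝ) (hσ : 0 < σ) (r : ℕ → ℝ) (W U : ℕ → Ω → ℝ) (h : IsCorrBMPair r W U)
    (a b c : ℝ) (ha : 0 < a) (hac : a < c) (hb : a + 10 < b) (t : ℕ) :
    Tendsto (fun T => variance (gbmGammaEq2 σ a b c W U T t) (ℙ : Measure Ω))
      atTop (nhds 0) ∧
    Tendsto (fun T => variance (gbmGammaEq2 σ a b c W W T t) (ℙ : Measure Ω))
      atTop (nhds 0) ∧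
    Tendsto (fun T => variance (gbmGammaEq2 σ a b c U U T t) (ℙ : Measure Ω))
      atTop (nhds 0) := by
  have hW := h.bmX.hasLaw_s7
  have hU := h.bmY.hasLaw_s7
  have hab : 4 ≤ a + b := by linarith
  exact ⟨tendsto_variance_gbmGammaEq2 hW hU hσ.ne' ha.le hab hac,
    tendsto_variance_gbmGammaEq2 hW hW hσ.ne' ha.le hab hac,
    tendsto_variance_gbmGammaEq2 hU hU hσ.ne' ha.le hab hac⟩

theorem statement7 {Ω : Type*} [MeasureSpace Ω] [IsProbabilityMeasure (ℙ : Measure Ω)]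
    (σ : ℝ) (hσ : 0 < σ) (r : ℕ → ℝ) (W U : ℕ → Ω → ℝ) (h : IsCorrBMPair r W U)
    (a b c : ℝ) (ha : 0 < a) (hac : a < c) (hb : a + 10 < b) (t : ℕ) (ht : 1 ≤ t) :
    Tendsto (fun T => variance (gbmGammaEq2 σ a b c W U T t) (ℙ : Measure Ω))
      atTop (nhds 0) ∧
    Tendsto (fun T => variance (gbmGammaEq2 σ a b c W W T t) (ℙ : Measure Ω))
      atTop (nhds 0) ∧
    Tendsto (fun T => variance (gbmGammaEq2 σ a b c U U T t) (ℙ : Measure Ω))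
      atTop (nhds 0) :=
  statement7_general σ hσ r W U h a b c ha hac hb t
end
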